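/- Progress for the CPS fragment of the symmetric data/codata calculus: if the closed command c₁ is well-typed (⋄ ⊢ c₁ :cmd with respect to a well-formed program P), then either c₁ = Done or there exists a command c₂ such that c₁ ▷ c₂. -/

import Mathlib

namespace SymCalc

/-! Basic syntactic categories of the symmetric data/codata calculus (CPS fragment). -/

abbrev Var := String
abbrev TName := String
abbrev XName := String

inductive Polarity | dat | cod
deriving DecidableEq, Repr

inductive Orientation | prd | con
deriving DecidableEq, Repr

inductive Strategy | cbv | cbn
deriving DecidableEq, Repr

def Polarity.flip : Polarity → Polarity
  | .dat => .cod | .cod => .dat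

def Orientation.flip : Orientation → Orientation
  | .prd => .con | .con => .prd

def Strategy.flip : Strategy → Strategy
  | .cbv => .cbn | .cbn => .cbv

/-- `val p` : the orientation of the canonical xtors of a type of polarity `p`. -/
def Polarity.val : Polarity → Orientation
  | .dat => .prd | .cod => .con

/-- `cnt p` : the orientation of (co)pattern matches on a type of polarity `p`. -/
def Polarity.cnt : Polarity → Orientation
  | .dat => .con | .cod => .prd

/-- Typing contexts: each variable carries an orientation (producer/consumer) and a type name.
The head of the list is the innermost binding. -/
abbrev Ctx := List (Var × Orientation × TName)

/-- Erase the variable names of a context, keeping orientations and types. -/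
def eraseCtx (Γ : Ctx) : List (Orientation × TName) := Γ.map (·.2)

mutual
/-- Expressions `e ::= x | 𝒳σ | match_p T { 𝒳Δ ⇒ c; … }`. -/
inductive Expr : Type
  | var : Var → Expr
  | xtor : XName → List Expr → Expr
  | mtch : Polarity → TName → List (XName × Ctx × Cmd) → Expr
/-- Commands `c ::= e₁ ≫ e₂ | Done`. -/
inductive Cmd : Type
  | cut : Expr → Expr → Cmd
  | done : Cmd
end

/-! Substitution. -/

abbrev Env := List (Var × Expr)

/-- Remove the bindings shadowed by the bound variables `xs`. -/
def shadowV (xs : List Var) (m : Env) : Env :=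
  m.filter (fun q => ¬ xs.contains q.1)

mutual
/-- Substitute the (closed) expressions of `m` for free variables in an expression. -/
def substExpr (m : Env) : Expr → Expr
  | .var x => (m.lookup x).getD (.var x)
  | .xtor n σ => .xtor n (σ.attach.map (fun ⟨e, _⟩ => substExpr m e))
  | .mtch p T cases =>
      .mtch p T (cases.attach.map
        (fun ⟨cs, _⟩ => (cs.1, cs.2.1, substCmd (shadowV (cs.2.1.map (·.1)) m) cs.2.2)))
termination_by e => sizeOf e
decreasing_by
  · have h := List.sizeOf_lt_of_mem ‹e ∈ σ›
    simp only [Expr.xtor.sizeOf_spec]; omega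
  · have h := List.sizeOf_lt_of_mem ‹cs ∈ cases›
    obtain ⟨n', Δ', c'⟩ := cs
    simp only [Expr.mtch.sizeOf_spec, Prod.mk.sizeOf_spec] at h ⊢; omega
/-- Substitute the (closed) expressions of `m` for free variables in a command. -/
def substCmd (m : Env) : Cmd → Cmd
  | .cut e₁ e₂ => .cut (substExpr m e₁) (substExpr m e₂)
  | .done => .done
termination_by c => sizeOf c
decreasing_by
  · simp only [Cmd.cut.sizeOf_spec]; omega
  · simp only [Cmd.cut.sizeOf_spec]; omega
end

/-- Pair the variables of a context with the expressions of a substitution. -/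
def bindArgs (Δ : Ctx) (σ : List Expr) : Env := List.zip (Δ.map (·.1)) σ

/-! Programs. -/

/-- A function declaration `𝒳Π := match_p T { 𝒴Δ ⇒ c; … }` (co)pattern matching on
all xtors of the type it belongs to. -/
structure FunDecl where
  name : XName
  args : Ctx
  cases : List (XName × Ctx × Cmd)

/-- A type declaration `s p type T { 𝒳Δ; … } with f₁ … fₙ`. -/
structure TypeDecl where
  strat : Strategy
  pol : Polarity
  name : TName
  xtors : List (XName × Ctx)
  funs : List FunDecl

/-- A program: a list of type declarations together with a top-level command. -/
structure Program where
  decls : List TypeDecl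
  main : Cmd

def Program.findType (P : Program) (T : TName) : Option TypeDecl :=
  P.decls.find? (fun td => td.name = T)

/-! Typing. -/

mutual
/-- Expression typing `Γ ⊢ e :ᵒ T` (producer/consumer typing). -/
inductive HasTy (P : Program) : Ctx → Expr → Orientation → TName → Prop
  | var : ∀ Γ x o T, Γ.lookup x = some (o, T) → HasTy P Γ (.var x) o T
  | xtor : ∀ Γ td X Δ τ, td ∈ P.decls → (X, Δ) ∈ td.xtors →
      SubstTy P Γ τ Δ → HasTy P Γ (.xtor X τ) td.pol.val td.name
  | fn : ∀ Γ td f τ, td ∈ P.decls → f ∈ td.funs →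
      SubstTy P Γ τ f.args → HasTy P Γ (.xtor f.name τ) td.pol.cnt td.name
  | mtch : ∀ Γ td cases, td ∈ P.decls →
      cases.map (fun cs => (cs.1, eraseCtx cs.2.1)) = td.xtors.map (fun g => (g.1, eraseCtx g.2)) →
      (∀ cs ∈ cases, CmdTy P (cs.2.1 ++ Γ) cs.2.2) →
      HasTy P Γ (.mtch td.pol td.name cases) td.pol.cnt td.name
/-- Substitution typing `Γ ⊢ σ : Δ`. -/
inductive SubstTy (P : Program) : Ctx → List Expr → Ctx → Prop
  | nil : ∀ Γ, SubstTy P Γ [] []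
  | cons : ∀ Γ σ Δ e x o T, SubstTy P Γ σ Δ → HasTy P Γ e o T →
      SubstTy P Γ (e :: σ) ((x, o, T) :: Δ)
/-- Command typing `Γ ⊢ c :cmd`. -/
inductive CmdTy (P : Program) : Ctx → Cmd → Prop
  | cut : ∀ Γ e₁ e₂ T, HasTy P Γ e₁ .prd T → HasTy P Γ e₂ .con T → CmdTy P Γ (.cut e₁ e₂)
  | done : ∀ Γ, CmdTy P Γ .done
end

/-! Operational semantics. -/

/-- One-step reduction of closed commands, relative to a program `P`. -/
inductive Step (P : Program) : Cmd → Cmd → Prop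
  | mtch : ∀ X σ T cases Δ c, (X, Δ, c) ∈ cases →
      Step P (.cut (.xtor X σ) (.mtch .dat T cases)) (substCmd (bindArgs Δ σ) c)
  | comtch : ∀ X σ T cases Δ c, (X, Δ, c) ∈ cases →
      Step P (.cut (.mtch .cod T cases) (.xtor X σ)) (substCmd (bindArgs Δ σ) c)
  | conCall : ∀ td f Y Δ c σ τ, td ∈ P.decls → td.pol = .dat → f ∈ td.funs →
      (Y, Δ, c) ∈ f.cases →
      Step P (.cut (.xtor Y τ) (.xtor f.name σ))
        (substCmd (bindArgs f.args σ) (substCmd (bindArgs Δ τ) c))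
  | prdCall : ∀ td f Y Δ c σ τ, td ∈ P.decls → td.pol = .cod → f ∈ td.funs →
      (Y, Δ, c) ∈ f.cases →
      Step P (.cut (.xtor f.name σ) (.xtor Y τ))
        (substCmd (bindArgs f.args σ) (substCmd (bindArgs Δ τ) c))

/-! Well-formedness of programs. -/

/-- Well-formedness of a function declaration belonging to the type declaration `td`
(rule Wf-Fun): the (co)pattern match is exhaustive, binds exactly the declared
argument contexts, and each case body typechecks. -/
def FunWf (P : Program) (td : TypeDecl) (f : FunDecl) : Prop :=
  f.cases.map (fun cs => (cs.1, cs.2.1)) = td.xtors ∧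
  ∀ cs ∈ f.cases, CmdTy P (cs.2.1 ++ f.args) cs.2.2

/-- All names used in a program are unambiguous. -/
def NamesUnambiguous (P : Program) : Prop :=
  (P.decls.map (·.name)).Nodup ∧
  (P.decls.flatMap (fun td => td.xtors.map (·.1) ++ td.funs.map (·.name))).Nodup

/-- Well-formedness of programs (rules Wf-Prog and Wf-Type). -/
def Program.wf (P : Program) : Prop :=
  NamesUnambiguous P ∧
  (∀ td ∈ P.decls, ∀ f ∈ td.funs, FunWf P td f) ∧
  CmdTy P [] P.main
/-!
A closed expression of type `T` is, by inversion of typing, either an xtor of `T` or a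
(co)pattern match on `T` (a function call being a named match); the orientation and the
polarity of `T` decide which. In a closed cut one side is therefore an xtor and the other a
match on the same declaration (type names are unambiguous), and exhaustiveness of the match
supplies the case that fires.
-/

theorem _root_.List.exists_mem_of_map_fst_eq {α β γ : Type*} {l : List (α × β)}
    {l' : List (α × γ)} (h : l.map Prod.fst = l'.map Prod.fst) {a : α} {c : γ}
    (hc : (a, c) ∈ l') : ∃ b, (a, b) ∈ l := by
  have ha : a ∈ l.map Prod.fst := h ▸ List.mem_map_of_mem hc
  obtain ⟨⟨_, b⟩, hb, rfl⟩ := List.mem_map.1 ha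
  exact ⟨b, hb⟩

def IsXtorOf (td : TypeDecl) (e : Expr) : Prop :=
  ∃ X Δ τ, (X, Δ) ∈ td.xtors ∧ e = .xtor X τ

def IsMatchOf (td : TypeDecl) (e : Expr) : Prop :=
  (∃ f ∈ td.funs, ∃ σ, e = .xtor f.name σ) ∨
  ∃ cases : List (XName × Ctx × Cmd),
    cases.map Prod.fst = td.xtors.map Prod.fst ∧ e = .mtch td.pol td.name cases

theorem FunWf.map_fst_cases {P : Program} {td : TypeDecl} {f : FunDecl} (h : FunWf P td f) :
    f.cases.map Prod.fst = td.xtors.map Prod.fst := by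
  simpa [List.map_map, Function.comp_def] using congrArg (List.map Prod.fst) h.1

theorem HasTy.canonical_nil {P : Program} {e : Expr} {o : Orientation} {T : TName}
    (h : HasTy P [] e o T) :
    ∃ td ∈ P.decls, td.name = T ∧
      (o = td.pol.val ∧ IsXtorOf td e ∨ o = td.pol.cnt ∧ IsMatchOf td e) := by
  cases h with
  | var _ x _ _ hx => simp at hx
  | xtor _ td X Δ τ htd hX _ => exact ⟨td, htd, rfl, .inl ⟨rfl, X, Δ, τ, hX, rfl⟩⟩
  | fn _ td f τ htd hf _ => exact ⟨td, htd, rfl, .inr ⟨rfl, .inl ⟨f, hf, τ, rfl⟩⟩⟩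
  | mtch _ td cases htd hcov _ =>
    have hnames : cases.map Prod.fst = td.xtors.map Prod.fst := by
      simpa [List.map_map, Function.comp_def] using congrArg (List.map Prod.fst) hcov
    exact ⟨td, htd, rfl, .inr ⟨rfl, .inr ⟨cases, hnames, rfl⟩⟩⟩

section Redex

variable {P : Program} {td : TypeDecl} {e₁ e₂ : Expr}

theorem exists_step_of_dat (htd : td ∈ P.decls) (hfuns : ∀ f ∈ td.funs, FunWf P td f)
    (hdat : td.pol = .dat) (hx : IsXtorOf td e₁) (hm : IsMatchOf td e₂) :
    ∃ c, Step P (.cut e₁ e₂) c := by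
  obtain ⟨X, Δ, τ, hX, rfl⟩ := hx
  rcases hm with ⟨f, hf, σ, rfl⟩ | ⟨cases, hnames, rfl⟩
  · obtain ⟨⟨Δ', c⟩, hc⟩ := List.exists_mem_of_map_fst_eq (hfuns f hf).map_fst_cases hX
    exact ⟨_, .conCall td f X Δ' c σ τ htd hdat hf hc⟩
  · obtain ⟨⟨Δ', c⟩, hc⟩ := List.exists_mem_of_map_fst_eq hnames hX
    rw [hdat]
    exact ⟨_, .mtch X τ td.name cases Δ' c hc⟩

theorem exists_step_of_cod (htd : td ∈ P.decls) (hfuns : ∀ f ∈ td.funs, FunWf P td f)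
    (hcod : td.pol = .cod) (hx : IsXtorOf td e₁) (hm : IsMatchOf td e₂) :
    ∃ c, Step P (.cut e₂ e₁) c := by
  obtain ⟨X, Δ, τ, hX, rfl⟩ := hx
  rcases hm with ⟨f, hf, σ, rfl⟩ | ⟨cases, hnames, rfl⟩
  · obtain ⟨⟨Δ', c⟩, hc⟩ := List.exists_mem_of_map_fst_eq (hfuns f hf).map_fst_cases hX
    exact ⟨_, .prdCall td f X Δ' c σ τ htd hcod hf hc⟩
  · obtain ⟨⟨Δ', c⟩, hc⟩ := List.exists_mem_of_map_fst_eq hnames hX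
    rw [hcod]
    exact ⟨_, .comtch X τ td.name cases Δ' c hc⟩

end Redex

/-- **Progress** (Theorem 3.2): if the closed command `c₁` is well-typed with respect to
a well-formed program `P`, then either `c₁ = Done` or `c₁` takes a step. -/
theorem progress (P : Program) (hP : P.wf) (c₁ : Cmd)
    (h₁ : CmdTy P [] c₁) :
    c₁ = Cmd.done ∨ ∃ c₂, Step P c₁ c₂ := by
  obtain ⟨⟨hnames, -⟩, hfuns, -⟩ := hP
  rcases h₁ with ⟨_, e₁, e₂, T, ht₁, ht₂⟩ | _
  · obtain ⟨td, htd, rfl, h₁⟩ := ht₁.canonical_nil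
    obtain ⟨td', htd', hname, h₂⟩ := ht₂.canonical_nil
    obtain rfl := List.inj_on_of_nodup_map hnames htd htd' hname.symm
    right
    cases hpol : td.pol <;>
      simp only [hpol, Polarity.val, Polarity.cnt, reduceCtorEq, true_and, false_and,
        or_false, false_or] at h₁ h₂
    · exact exists_step_of_dat htd (hfuns td htd) hpol h₁ h₂
    · exact exists_step_of_cod htd (hfuns td htd) hpol h₂ h₁
  · exact .inl rfl

end SymCalc
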